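/- arXiv:1903.00679 — 3 statements merged into one kernel-verified Lean document; each statement's English description precedes it below -/
import Mathlib

section
/- Let X be a rank one normal projective surface with quotient singularities such that K_X is not numerically trivial, let π : Y → X be the minimal resolution with exceptional curves E₁, ..., E_r, and let R + ⟨K_Y⟩ be the sublattice of H²(Y, ℤ)/torsion spanned by K_Y, E₁, ..., E_r. Then |det(R + ⟨K_Y⟩)| is the square of an integer. -/
open Matrix

theorem Matrix.det_transpose_mul_mul_self {n R : Type*} [Fintype n] [DecidableEq n] [CommRing R]
    (A U : Matrix n n R) : (Aᵀ * U * A).det = A.det ^ 2 * U.det := by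
  rw [det_mul, det_mul, det_transpose]
  ring

theorem Matrix.abs_det_transpose_mul_mul_self {n R : Type*} [Fintype n] [DecidableEq n]
    [CommRing R] [LinearOrder R] [IsStrictOrderedRing R] (A U : Matrix n n R) :
    |(Aᵀ * U * A).det| = A.det ^ 2 * |U.det| := by
  rw [det_transpose_mul_mul_self, abs_mul, abs_sq]

/-- If the Gram matrix `G` of `(K_Y, E₁, …, E_r)` (integer intersection-number
matrix) is expressed as `Aᵀ U A` with `A` a rational matrix and `U` the Gram
matrix of an integral basis of the unimodular lattice `H²(Y,ℤ)/torsion`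
(`det U = ±1`), then `|det G|` is the square of an integer. -/
theorem stmt_6 (r : ℕ) (G U : Matrix (Fin (r + 1)) (Fin (r + 1)) ℤ)
    (A : Matrix (Fin (r + 1)) (Fin (r + 1)) ℚ)
    (hU : U.det = 1 ∨ U.det = -1)
    (hG : G.map (Int.cast : ℤ → ℚ) = Aᵀ * U.map (Int.cast : ℤ → ℚ) * A) :
    ∃ k : ℤ, |G.det| = k ^ 2 := by
  have hUabs : |U.det| = 1 := by rcases hU with h | h <;> simp [h]
  have det_cast (M : Matrix (Fin (r + 1)) (Fin (r + 1)) ℤ) :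
      (M.map (Int.cast : ℤ → ℚ)).det = M.det :=
    ((Int.castRingHom ℚ).map_det M).symm
  have hcast : ((|G.det| : ℤ) : ℚ) = A.det ^ 2 := by
    rw [Int.cast_abs, ← det_cast, hG, abs_det_transpose_mul_mul_self, det_cast, ← Int.cast_abs,
      hUabs, Int.cast_one, mul_one]
  obtain ⟨k, hk⟩ := Rat.isSquare_intCast_iff.mp (hcast ▸ IsSquare.sq A.det)
  exact ⟨k, hk.trans (sq k).symm⟩
end

section
/- On the Hirzebruch surface F₁ blown up at three further points (Picard rank 5), with basis e₁, e₂, e₃, e₄ = σ, e₅ = fiber, where e₁² = e₂² = e₃² = -1, e₄² = -1, e₅² = 0, e₄·e₅ = 1 and all other products 0, any class C = a₁e₁ + a₂e₂ + a₃e₃ + x e₄ + y e₅ with x, y ≥ 0, C² = -3, and K·C = 1 satisfies (x, y) ∈ {(0,1), (0,0), (1,0)}, and correspondingly (a₁,a₂,a₃) equals (-1,-1,-1), a permutation of (1,-1,-1), or a permutation of (0,-1,-1). -/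
set_option maxHeartbeats 2000000 in


/-- Classification of (-3)-curve classes `C = a₁e₁ + a₂e₂ + a₃e₃ + x e₄ + y e₅`
(with `e₁² = e₂² = e₃² = e₄² = -1`, `e₅² = 0`, `e₄·e₅ = 1`) satisfying
`C² = -3`, `K·C = 1`, `x, y ≥ 0`. -/
theorem stmt_9 (a₁ a₂ a₃ x y : ℤ) (hx : 0 ≤ x) (hy : 0 ≤ y)
    (hC2 : -(a₁ ^ 2 + a₂ ^ 2 + a₃ ^ 2) - x ^ 2 + 2 * x * y = -3)
    (hKC : -(a₁ + a₂ + a₃) - x - 2 * y = 1) :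
    ((x, y) = ((0 : ℤ), 1) ∧ (a₁, a₂, a₃) = ((-1 : ℤ), -1, -1)) ∨
    ((x, y) = ((0 : ℤ), 0) ∧
      ((a₁, a₂, a₃) = ((1 : ℤ), -1, -1) ∨ (a₁, a₂, a₃) = ((-1 : ℤ), 1, -1) ∨
        (a₁, a₂, a₃) = ((-1 : ℤ), -1, 1))) ∨
    ((x, y) = ((1 : ℤ), 0) ∧
      ((a₁, a₂, a₃) = ((0 : ℤ), -1, -1) ∨ (a₁, a₂, a₃) = ((-1 : ℤ), 0, -1) ∨
        (a₁, a₂, a₃) = ((-1 : ℤ), -1, 0))) := by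
  have key : 2*x^2 - x*y + 2*y^2 + x + 2*y ≤ 4 := by
    nlinarith [sq_nonneg (a₁-a₂), sq_nonneg (a₁-a₃), sq_nonneg (a₂-a₃)]
  have hx1 : x ≤ 1 := by nlinarith [sq_nonneg (x-y), sq_nonneg x, sq_nonneg y]
  have hy1 : y ≤ 1 := by nlinarith [sq_nonneg (x-y), sq_nonneg x, sq_nonneg y]
  have ha1 : a₁^2 ≤ 4 := by nlinarith [sq_nonneg a₂, sq_nonneg a₃]
  have ha2 : a₂^2 ≤ 4 := by nlinarith [sq_nonneg a₁, sq_nonneg a₃]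
  have ha3 : a₃^2 ≤ 4 := by nlinarith [sq_nonneg a₁, sq_nonneg a₂]
  have hb1a : -2 ≤ a₁ := by nlinarith [sq_nonneg (a₁+2)]
  have hb1b : a₁ ≤ 2 := by nlinarith [sq_nonneg (a₁-2)]
  have hb2a : -2 ≤ a₂ := by nlinarith [sq_nonneg (a₂+2)]
  have hb2b : a₂ ≤ 2 := by nlinarith [sq_nonneg (a₂-2)]
  have hb3a : -2 ≤ a₃ := by nlinarith [sq_nonneg (a₃+2)]
  have hb3b : a₃ ≤ 2 := by nlinarith [sq_nonneg (a₃-2)]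
  interval_cases x <;> interval_cases y <;> interval_cases a₁ <;> interval_cases a₂ <;>
    interval_cases a₃ <;> (revert hC2 hKC; norm_num)
end

section
/- Suppose rational numbers satisfy the following, arising from a curve C with C² = -5/2 on a surface Y mapping to Z = P(1,2,3): C_Z ∼ nL with -K_Z ∼ 6L, L² = 1/6, ψ*C_Z = C + αE where E² = -1/4, -K_Y·E = 1/2, -K_Y·C = -1, and -K_Y·ψ*C_Z = -K_Z·C_Z = n. Then α = 2(n+1), and the equation (ψ*C_Z)² computed two ways gives 5n² + 12n - 9 = 0, which has no integer solutions n ≥ 0. -/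
/-!
Substituting `α = 2(n + 1)` into `n²/6 = -5/2 + α²/4` gives `5n² + 12n - 9 = 0`,
i.e. `(5n - 3)(n + 3) = 0`, whose roots `3/5` and `-3` are not nonnegative integers.
-/

theorem Int.five_mul_sq_add_twelve_mul_sub_nine_ne_zero {n : ℤ} (hn : 0 ≤ n) :
    5 * n ^ 2 + 12 * n - 9 ≠ 0 := by
  intro h
  have hfactor : (5 * n - 3) * (n + 3) = 0 := by linear_combination h
  rcases mul_eq_zero.mp hfactor with h | h <;> omega

/-- Case 17-6: from `n = -1 + α/2` and `n²/6 = -5/2 + α²/4` one gets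
`α = 2(n+1)` and `5n² + 12n - 9 = 0`, which has no nonnegative integer
solution — a contradiction. -/
theorem stmt_12 (n : ℤ) (hn : 0 ≤ n) (α : ℚ)
    (hα : (n : ℚ) = -1 + α * (1 / 2))
    (hsq : (n : ℚ) ^ 2 / 6 = -5 / 2 + α ^ 2 / 4) :
    α = 2 * ((n : ℚ) + 1) ∧ 5 * (n : ℚ) ^ 2 + 12 * (n : ℚ) - 9 = 0 ∧ False := by
  have hα' : α = 2 * ((n : ℚ) + 1) := by linarith
  have hquad : 5 * (n : ℚ) ^ 2 + 12 * (n : ℚ) - 9 = 0 := by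
    subst hα'
    linear_combination -6 * hsq
  refine ⟨hα', hquad, Int.five_mul_sq_add_twelve_mul_sub_nine_ne_zero hn ?_⟩
  exact_mod_cast hquad
end
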